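/- arXiv:quant-ph/0109136 — 2 statements merged into one kernel-verified Lean document; each statement's English description precedes it below -/
import Mathlib

section
/- The maximum over α, β ∈ [0, π/2] and p₂ ∈ [0,1] of min(cos²(α-β), sin²α·cos²β + p₂, 1 - p₂) equals (52+4√7)/81. -/
private lemma aux_sq_le {x y : ℝ} (_hx : 0 ≤ x) (hy : 0 ≤ y) (h : x ^ 2 ≤ y ^ 2) :
    x ≤ y := by nlinarith

theorem stmt_2 :
    IsGreatest {p : ℝ | ∃ α ∈ Set.Icc 0 (Real.pi / 2), ∃ β ∈ Set.Icc 0 (Real.pi / 2),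
        ∃ p₂ ∈ Set.Icc (0 : ℝ) 1,
        p = min (Real.cos (α - β) ^ 2)
              (min (Real.sin α ^ 2 * Real.cos β ^ 2 + p₂) (1 - p₂))}
      ((52 + 4 * Real.sqrt 7) / 81) := by
  have h7 : Real.sqrt 7 ^ 2 = 7 := Real.sq_sqrt (by norm_num)
  have h7nn : (0:ℝ) ≤ Real.sqrt 7 := Real.sqrt_nonneg 7
  have h7lt : Real.sqrt 7 < 3 := by nlinarith [h7, h7nn]
  have h7gt : (2:ℝ) ≤ Real.sqrt 7 := by nlinarith [h7, h7nn]
  set s : ℝ := (4 + Real.sqrt 7) / 9 with hs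
  have hs0 : 0 ≤ s := by rw [hs]; positivity
  have hs1 : s ≤ 1 := by rw [hs]; nlinarith
  constructor
  · -- membership
    set a : ℝ := Real.arcsin (Real.sqrt s) with ha
    have hrs0 : 0 ≤ Real.sqrt s := Real.sqrt_nonneg s
    have hrs1 : Real.sqrt s ≤ 1 := Real.sqrt_le_one.mpr hs1
    have ha0 : 0 ≤ a := Real.arcsin_nonneg.mpr hrs0
    have ha1 : a ≤ Real.pi / 2 := Real.arcsin_le_pi_div_two _
    have hsin : Real.sin a = Real.sqrt s := Real.sin_arcsin (by linarith) hrs1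
    have hcos : Real.cos a = Real.sqrt (1 - s) := by
      rw [ha, Real.cos_arcsin, Real.sq_sqrt hs0]
    refine ⟨a, ⟨ha0, ha1⟩, Real.pi / 2 - a, ⟨by linarith, by linarith⟩,
      (29 - 4 * Real.sqrt 7) / 81, ⟨by nlinarith, by nlinarith⟩, ?_⟩
    have hcosb : Real.cos (Real.pi / 2 - a) = Real.sin a := Real.cos_pi_div_two_sub a
    have hsinb : Real.sin (Real.pi / 2 - a) = Real.cos a := Real.sin_pi_div_two_sub a
    have hsinab : Real.sin (a - (Real.pi / 2 - a)) = 2 * s - 1 := by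
      rw [Real.sin_sub, hcosb, hsinb, hsin, hcos, Real.mul_self_sqrt hs0,
        Real.mul_self_sqrt (by linarith)]
      ring
    have e1 : Real.cos (a - (Real.pi / 2 - a)) ^ 2 = (52 + 4 * Real.sqrt 7) / 81 := by
      rw [Real.cos_sq', hsinab, hs]
      linear_combination (-4/81 : ℝ) * h7
    have e2 : Real.sin a ^ 2 * Real.cos (Real.pi / 2 - a) ^ 2 + (29 - 4 * Real.sqrt 7) / 81
        = (52 + 4 * Real.sqrt 7) / 81 := by
      rw [hcosb, hsin, Real.sq_sqrt hs0, hs]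
      linear_combination (1/81 : ℝ) * h7
    have e3 : 1 - (29 - 4 * Real.sqrt 7) / 81 = (52 + 4 * Real.sqrt 7) / 81 := by ring
    rw [e1, e2, e3]; simp
  · -- upper bound
    rintro p ⟨α, ⟨hα0, hα1⟩, β, ⟨hβ0, hβ1⟩, p₂, ⟨hp0, hp1⟩, rfl⟩
    have hpi := Real.pi_pos
    have hu0 : 0 ≤ Real.sin α := Real.sin_nonneg_of_nonneg_of_le_pi hα0 (by linarith)
    have hv0 : 0 ≤ Real.cos β := Real.cos_nonneg_of_mem_Icc ⟨by linarith, hβ1⟩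
    have hu'0 : 0 ≤ Real.cos α := Real.cos_nonneg_of_mem_Icc ⟨by linarith, hα1⟩
    have hv'0 : 0 ≤ Real.sin β := Real.sin_nonneg_of_nonneg_of_le_pi hβ0 (by linarith)
    have hu : Real.sin α ^ 2 + Real.cos α ^ 2 = 1 := Real.sin_sq_add_cos_sq α
    have hv : Real.sin β ^ 2 + Real.cos β ^ 2 = 1 := Real.sin_sq_add_cos_sq β
    set u := Real.sin α
    set u' := Real.cos α
    set v := Real.cos β
    set v' := Real.sin β
    have hcos2 : Real.cos (α - β) ^ 2 = 1 - (u * v - u' * v') ^ 2 := by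
      rw [Real.cos_sq', Real.sin_sub]
    have m1 : min (Real.cos (α - β) ^ 2) (min (u ^ 2 * v ^ 2 + p₂) (1 - p₂))
        ≤ Real.cos (α - β) ^ 2 := min_le_left _ _
    have m2 : min (Real.cos (α - β) ^ 2) (min (u ^ 2 * v ^ 2 + p₂) (1 - p₂))
        ≤ u ^ 2 * v ^ 2 + p₂ := le_trans (min_le_right _ _) (min_le_left _ _)
    have m3 : min (Real.cos (α - β) ^ 2) (min (u ^ 2 * v ^ 2 + p₂) (1 - p₂))
        ≤ 1 - p₂ := le_trans (min_le_right _ _) (min_le_right _ _)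
    rcases le_or_gt (u * v) s with hle | hlt
    · nlinarith [m2, m3, mul_nonneg hu0 hv0, h7]
    · have huv1 : u * v ≤ 1 := by nlinarith [sq_nonneg (u - v), sq_nonneg (u' + v')]
      have hid : (1 - u * v) ^ 2 - (u' * v') ^ 2 = (u - v) ^ 2 := by
        linear_combination (-v' ^ 2) * hu - (1 - u ^ 2) * hv
      have hw : u' * v' ≤ 1 - u * v :=
        aux_sq_le (mul_nonneg hu'0 hv'0) (by linarith)
          (by linarith [hid, sq_nonneg (u - v)])
      have hst : 0 < 2 * s - 1 := by rw [hs]; linarith [h7gt]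
      have hkey : (2 * s - 1) ^ 2 ≤ (u * v - u' * v') ^ 2 :=
        pow_le_pow_left₀ hst.le (by linarith) 2
      have hval : (2 * s - 1) ^ 2 = (29 - 4 * Real.sqrt 7) / 81 := by
        rw [hs]; linear_combination (4 / 81 : ℝ) * h7
      linarith [m1, hcos2, hkey, hval]
end

section
/- For α ∈ [0, π/2] with cos²α < 1/2, the inequality 1 - 2sin²(3α) + cos³(2α) ≥ 0 holds if and only if -10cos⁴α + 10cos²α - 1 ≥ 0, which holds if and only if cos²α ∈ [1/2 - √15/10, 1/2]. -/
theorem stmt_12 (α : ℝ) (hα : α ∈ Set.Icc 0 (Real.pi / 2))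
    (hc : Real.cos α ^ 2 < 1 / 2) :
    (1 - 2 * Real.sin (3 * α) ^ 2 + Real.cos (2 * α) ^ 3 ≥ 0 ↔
      -10 * Real.cos α ^ 4 + 10 * Real.cos α ^ 2 - 1 ≥ 0) ∧
    (-10 * Real.cos α ^ 4 + 10 * Real.cos α ^ 2 - 1 ≥ 0 ↔
      Real.cos α ^ 2 ∈ Set.Icc (1 / 2 - Real.sqrt 15 / 10) (1 / 2)) := by
  have hs15 : Real.sqrt 15 ^ 2 = 15 := Real.sq_sqrt (by norm_num)
  have hs15nn : (0:ℝ) ≤ Real.sqrt 15 := Real.sqrt_nonneg 15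
  have key : 1 - 2 * Real.sin (3 * α) ^ 2 + Real.cos (2 * α) ^ 3 =
      2 * (1 - 2 * Real.cos α ^ 2) * (-10 * Real.cos α ^ 4 + 10 * Real.cos α ^ 2 - 1) := by
    rw [Real.sin_sq, Real.cos_three_mul, Real.cos_two_mul]
    ring
  have hpos : 0 < 1 - 2 * Real.cos α ^ 2 := by linarith
  constructor
  · rw [key]
    constructor
    · intro h
      nlinarith
    · intro h
      nlinarith
  · constructor
    · intro h
      refine ⟨?_, by linarith⟩
      nlinarith [sq_nonneg (Real.cos α ^ 2 - (1/2 - Real.sqrt 15 / 10))]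
    · rintro ⟨h1, h2⟩
      nlinarith [sq_nonneg (Real.cos α ^ 2 - (1/2 - Real.sqrt 15 / 10)),
        sq_nonneg (Real.cos α ^ 2 - (1/2 + Real.sqrt 15 / 10))]
end
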